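/- Let M be a monoid and let Θ be an equivalence from the category of left M-sets to itself such that G∘Θ is naturally isomorphic to G, where G is the forgetful functor to Set. Then Θ is naturally isomorphic to θ* for some monoid automorphism θ : M → M. -/

import Mathlib

/-!
STATEMENT 8: if `Θ` is a self-equivalence of the category of left `M`-sets with
`G ∘ Θ ≅ G` for `G` the forgetful functor, then `Θ ≅ θ*` for some monoid
automorphism `θ` of `M`.  Here `M`-Set is `Action (Type u) (MonCat.of M)` and `θ*`
is the restriction functor `Action.res` along `θ` (so the `θ*`-action is
`m · n = θ(m)n`).
-/

open CategoryTheory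

universe u

namespace Stmt8

variable {M : Type u} [Monoid M]

local notation "R" => Action.leftRegular M

/-- The orbit map `m ↦ m • n` as an equivariant map from the left regular action. -/
def orbitHom (N : Action (Type u) (MonCat.of M)) (n : N.V) :
    (Action.leftRegular M) ⟶ N where
  hom := TypeCat.ofHom fun m => N.ρ m n
  comm := fun g => ConcreteCategory.hom_ext _ _ fun x => by
    show N.ρ (@HMul.hMul M M M _ g x) n = N.ρ g (N.ρ x n)
    exact types_congr_hom (map_mul N.ρ g x) n

variable (Θ : Action (Type u) (MonCat.of M) ⥤ Action (Type u) (MonCat.of M))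
  (η : Θ ⋙ Action.forget (Type u) (MonCat.of M) ≅ Action.forget (Type u) (MonCat.of M))

/-- The underlying function of the candidate automorphism. -/
def thetaFun (m : M) : M :=
  η.hom.app R ((Θ.obj R).ρ m (η.inv.app R (1 : M)))

lemma eta_inj (N : Action (Type u) (MonCat.of M)) :
    Function.Injective (η.hom.app N) := fun a b hab => by
  have h1 := types_congr_hom (η.hom_inv_id_app N) a
  have h2 := types_congr_hom (η.hom_inv_id_app N) b
  simp only [types_comp_apply, types_id_apply] at h1 h2
  rw [← h1, ← h2, hab]

lemma eta_nat {N P : Action (Type u) (MonCat.of M)} (f : N ⟶ P) (z : (Θ.obj N).V) :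
    η.hom.app P ((Θ.map f).hom z) = f.hom (η.hom.app N z) := by
  have := types_congr_hom (η.hom.naturality f) z
  exact this

lemma key (N : Action (Type u) (MonCat.of M)) (m : M) (x : (Θ.obj N).V) :
    η.hom.app N ((Θ.obj N).ρ m x) = N.ρ (thetaFun Θ η m) (η.hom.app N x) := by
  set n : N.V := η.hom.app N x with hn
  set f : (Action.leftRegular M) ⟶ N := orbitHom N n with hf
  set y : (Θ.obj R).V := η.inv.app R (1 : M) with hy
  have hy1 : η.hom.app R y = (1 : M) := types_congr_hom (η.inv_hom_id_app R) (1 : M)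
  have hfx : (Θ.map f).hom y = x := by
    apply eta_inj Θ η N
    rw [eta_nat Θ η f y, hy1]
    show N.ρ (1 : M) n = η.hom.app N x
    rw [← hn]
    simp
  have hcomm := types_congr_hom ((Θ.map f).comm m) y
  simp only [types_comp_apply] at hcomm
  calc η.hom.app N ((Θ.obj N).ρ m x)
      = η.hom.app N ((Θ.obj N).ρ m ((Θ.map f).hom y)) := by rw [hfx]
    _ = η.hom.app N ((Θ.map f).hom ((Θ.obj R).ρ m y)) := by rw [hcomm]
    _ = (show (Action.forget (Type u) (MonCat.of M)).obj N from
        f.hom (η.hom.app R ((Θ.obj R).ρ m y))) := by exact eta_nat Θ η f _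
    _ = (show (Action.forget (Type u) (MonCat.of M)).obj N from
        N.ρ (thetaFun Θ η m) n) := rfl

lemma thetaFun_one : thetaFun Θ η (1 : M) = 1 := by
  have h : ((Θ.obj R).ρ (1 : M)) = 𝟙 (Θ.obj R).V := Action.ρ_one _
  unfold thetaFun
  rw [h]
  exact types_congr_hom (η.inv_hom_id_app R) (1 : M)

lemma thetaFun_mul (a b : M) :
    thetaFun Θ η (a * b) = thetaFun Θ η a * thetaFun Θ η b := by
  unfold thetaFun
  have hmul : (Θ.obj R).ρ ((a : M) * b) (η.inv.app R (1 : M))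
      = (Θ.obj R).ρ a ((Θ.obj R).ρ b (η.inv.app R (1 : M))) := by
    rw [map_mul]; rfl
  rw [hmul]
  rw [key Θ η R a ((Θ.obj R).ρ b (η.inv.app R (1 : M)))]
  show thetaFun Θ η a * _ = _
  rfl

/-- The candidate monoid endomorphism. -/
def theta : M →* M where
  toFun := thetaFun Θ η
  map_one' := thetaFun_one Θ η
  map_mul' := thetaFun_mul Θ η

/-- The natural isomorphism `Θ ≅ res θ`. -/
def mainIso : Θ ≅ Action.res (Type u) (theta Θ η) :=
  NatIso.ofComponents
    (fun N => Action.mkIso (η.app N) (fun g => ConcreteCategory.hom_ext _ _ fun x => key Θ η N g x))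
    (fun f => by
      ext : 1
      exact ConcreteCategory.hom_ext _ _ fun z => eta_nat Θ η f z)

theorem main_aux (Θ : Action (Type u) (MonCat.of M) ⥤ Action (Type u) (MonCat.of M))
    (η : Θ ⋙ Action.forget (Type u) (MonCat.of M) ≅ Action.forget (Type u) (MonCat.of M)) :
    ∃ θ : M →* M, Nonempty (Θ ≅ Action.res (Type u) (θ)) :=
  ⟨theta Θ η, ⟨mainIso Θ η⟩⟩

theorem bij_of_res_iso_id (ψ : M →* M)
    (α : Action.res (Type u) (ψ) ≅ 𝟭 (Action (Type u) (MonCat.of M))) :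
    Function.Bijective ψ := by
  let uh : M → M := fun x => (α.hom.app R).hom x
  have hbij : Function.Bijective uh :=
    ((Action.forget (Type u) (MonCat.of M)).mapIso (α.app R)).toEquiv.bijective
  set c : M := uh 1 with hc
  have hnat : ∀ x z : M,
      uh ((Action.ofMulAction M M).ρ (z : M) x) = (Action.ofMulAction M M).ρ (uh z : M) x :=
    fun x z => types_congr_hom (congrArg Action.Hom.hom (α.hom.naturality (orbitHom R x)))
      (show ((Action.res (Type u) (ψ)).obj R).V from z)
  have huh : ∀ x : M, uh x = c * x := by
    intro x
    have h := hnat x 1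
    rw [show (Action.ofMulAction M M).ρ ((1 : M) : M) x = x by
      rw [Action.ofMulAction_apply, one_smul]] at h
    rw [h, Action.ofMulAction_apply, smul_eq_mul]
  obtain ⟨d, hd⟩ := hbij.2 1
  have hcd : c * d = 1 := by rw [← huh d]; exact hd
  have hdc : d * c = 1 := by
    apply hbij.1
    rw [huh (d * c), huh 1, mul_one, ← mul_assoc, hcd, one_mul]
  have hcomm : ∀ g z : M,
      uh ((Action.ofMulAction M M).ρ (ψ g : M) z) = (Action.ofMulAction M M).ρ (g : M) (uh z) :=
    fun g z => types_congr_hom ((α.hom.app R).comm g)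
      (show ((Action.res (Type u) (ψ)).obj R).V from z)
  have hequiv : ∀ g : M, c * ψ g = g * c := by
    intro g
    have h := hcomm g 1
    rw [Action.ofMulAction_apply, Action.ofMulAction_apply, smul_eq_mul, smul_eq_mul,
      mul_one, huh (ψ g)] at h
    exact h
  have hpsi : ∀ g : M, ψ g = d * (g * c) := fun g => by
    calc ψ g = (d * c) * ψ g := by rw [hdc, one_mul]
      _ = d * (c * ψ g) := by rw [mul_assoc]
      _ = d * (g * c) := by rw [hequiv g]
  constructor
  · intro a b hab
    rw [hpsi a, hpsi b] at hab
    have h1 : c * (d * (a * c)) = c * (d * (b * c)) := by rw [hab]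
    have h2 : ∀ t : M, c * (d * (t * c)) = t * c := fun t => by
      rw [← mul_assoc, hcd, one_mul]
    rw [h2 a, h2 b] at h1
    have h3 : ∀ t : M, (t * c) * d = t := fun t => by
      rw [mul_assoc, hcd, mul_one]
    calc a = (a * c) * d := (h3 a).symm
      _ = (b * c) * d := by rw [h1]
      _ = b := h3 b
  · intro t
    refine ⟨c * (t * d), ?_⟩
    rw [hpsi (c * (t * d))]
    calc d * ((c * (t * d)) * c) = d * (c * (t * (d * c))) := by
          simp only [mul_assoc]
      _ = t := by rw [hdc, mul_one, ← mul_assoc, hdc, one_mul]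

end Stmt8

theorem equivalence_preserving_forget_is_restriction (M : Type u) [Monoid M]
    (Θ : Action (Type u) (MonCat.of M) ⥤ Action (Type u) (MonCat.of M))
    [Θ.IsEquivalence]
    (h : Nonempty (Θ ⋙ Action.forget (Type u) (MonCat.of M) ≅
      Action.forget (Type u) (MonCat.of M))) :
    ∃ θ : M ≃* M, Nonempty (Θ ≅ Action.res (Type u) (θ.toMonoidHom)) := by
  obtain ⟨η⟩ := h
  obtain ⟨θ, ⟨i⟩⟩ := Stmt8.main_aux Θ η
  have η' : Θ.inv ⋙ Action.forget (Type u) (MonCat.of M) ≅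
      Action.forget (Type u) (MonCat.of M) :=
    (Functor.isoWhiskerLeft Θ.inv η).symm ≪≫
      (Functor.associator Θ.inv Θ (Action.forget (Type u) (MonCat.of M))).symm ≪≫
      Functor.isoWhiskerRight Θ.asEquivalence.counitIso (Action.forget (Type u) (MonCat.of M)) ≪≫
      (Action.forget (Type u) (MonCat.of M)).leftUnitor
  obtain ⟨θ', ⟨i'⟩⟩ := Stmt8.main_aux Θ.inv η'
  have c1 : Action.res (Type u) (θ) ⋙ Action.res (Type u) (θ') ≅
      𝟭 (Action (Type u) (MonCat.of M)) :=
    (Functor.isoWhiskerRight i (Action.res (Type u) (θ'))).symm ≪≫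
      Functor.isoWhiskerLeft Θ i'.symm ≪≫ Θ.asEquivalence.unitIso.symm
  have c2 : Action.res (Type u) (θ') ⋙ Action.res (Type u) (θ) ≅
      𝟭 (Action (Type u) (MonCat.of M)) :=
    (Functor.isoWhiskerRight i' (Action.res (Type u) (θ))).symm ≪≫
      Functor.isoWhiskerLeft Θ.inv i.symm ≪≫ Θ.asEquivalence.counitIso
  have α1 : Action.res (Type u) (θ.comp θ') ≅
      𝟭 (Action (Type u) (MonCat.of M)) :=
    (Action.resComp (Type u) (θ') (θ)).symm ≪≫ c1
  have α2 : Action.res (Type u) (θ'.comp θ) ≅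
      𝟭 (Action (Type u) (MonCat.of M)) :=
    (Action.resComp (Type u) (θ) (θ')).symm ≪≫ c2
  have b1 := Stmt8.bij_of_res_iso_id (θ.comp θ') α1
  have b2 := Stmt8.bij_of_res_iso_id (θ'.comp θ) α2
  have hsurj : Function.Surjective θ := fun b => by
    obtain ⟨a, ha⟩ := b1.2 b
    exact ⟨θ' a, ha⟩
  have hinj : Function.Injective θ := fun a b hab => by
    have : (θ'.comp θ) a = (θ'.comp θ) b := by
      simp only [MonoidHom.comp_apply, hab]
    exact b2.1 this
  exact ⟨MulEquiv.ofBijective θ ⟨hinj, hsurj⟩, ⟨i⟩⟩
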